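/- arXiv:0909.0443 — 5 statements merged into one kernel-verified Lean document; each statement's English description precedes it below -/
import Mathlib

section
/- Let p = kt + r with 0 < r < t < p and k ≥ 1. Then there exists a partial (t-1)-spread of PG(p-1, 2), i.e., a collection of pairwise disjoint t-dimensional linear subspaces of GF(2)^p (pairwise intersections equal {0}), of cardinality 2^r·(2^{kt} - 1)/(2^t - 1) - 2^r + 1. -/
/-!
A partial spread of `t`-spaces in `GF(q)^m` with `t ≤ m` extends to `GF(q)^t × GF(q^m)`: fix a
`GF(q)`-linear embedding `κ : GF(q)^t → GF(q^m)`; the graphs of `x ↦ a * κ x`, `a ∈ GF(q^m)`, are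
`q^m` further `t`-spaces, any two meet trivially because `(a - b) * κ x = 0` forces `x = 0`, and
they meet `0 × GF(q^m)` trivially. Starting from a single `t`-space in dimension `t + r` and
extending `k - 1` times reaches dimension `k t + r` with
`1 + q^r (q^t + q^{2t} + ⋯ + q^{(k-1)t})` spread elements.
-/

open Function Module Finset

def HasPartialSpread (K V : Type*) [Field K] [AddCommGroup V] [Module K V] (t N : ℕ) : Prop :=
  ∃ S : Finset (Submodule K V), S.card = N ∧ (∀ W ∈ S, finrank K W = t) ∧
    (S : Set (Submodule K V)).Pairwise (fun W₁ W₂ => W₁ ⊓ W₂ = ⊥)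

section General

variable {K V V' U : Type*} [Field K] [AddCommGroup V] [Module K V] [AddCommGroup V']
  [Module K V'] [AddCommGroup U] [Module K U] {t N : ℕ}

theorem hasPartialSpread_of_pairwise_disjoint {ι : Type*} [Fintype ι] (ht : 0 < t)
    (Φ : ι → Submodule K V) (hΦ : ∀ i, finrank K (Φ i) = t)
    (hdisj : Pairwise (Disjoint on Φ)) : HasPartialSpread K V t (Fintype.card ι) := by
  classical
  have hinj : Injective Φ := by
    intro i j hij
    by_contra hne
    have hbot := hdisj hne
    rw [onFun, hij, disjoint_self] at hbot
    have := hΦ j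
    rw [hbot, finrank_bot] at this
    omega
  refine ⟨univ.image Φ, by rw [card_image_of_injective _ hinj, card_univ], ?_, ?_⟩
  · intro W hW
    obtain ⟨i, -, rfl⟩ := mem_image.mp hW
    exact hΦ i
  · intro W₁ hW₁ W₂ hW₂ hne
    obtain ⟨i, -, rfl⟩ := mem_image.mp hW₁
    obtain ⟨j, -, rfl⟩ := mem_image.mp hW₂
    exact disjoint_iff.mp (hdisj fun hij => hne (hij ▸ rfl))

theorem HasPartialSpread.of_finrank_eq [FiniteDimensional K V] [FiniteDimensional K V']
    (hVV' : finrank K V = finrank K V') (ht : 0 < t) (h : HasPartialSpread K V t N) :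
    HasPartialSpread K V' t N := by
  obtain ⟨S, hcard, hrank, hdisj⟩ := h
  let e := LinearEquiv.ofFinrankEq V V' hVV'
  have := hasPartialSpread_of_pairwise_disjoint ht
    (fun W : S => (W : Submodule K V).map e.toLinearMap)
    (fun W => (LinearEquiv.finrank_map_eq e W).trans (hrank W W.2))
    (fun W₁ W₂ hne => Submodule.disjoint_map e.injective
      (disjoint_iff.mpr (hdisj W₁.2 W₂.2 (Subtype.coe_ne_coe.mpr hne))))
  rwa [Fintype.card_coe, hcard] at this

theorem hasPartialSpread_one [FiniteDimensional K V] (ht : 0 < t) (htV : t ≤ finrank K V) :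
    HasPartialSpread K V t 1 := by
  obtain ⟨f, hf⟩ := (finrank_le_iff_exists_linearMap (R := K) (M := Fin t → K) (M' := V)).mp
    (by rwa [finrank_fin_fun])
  have := hasPartialSpread_of_pairwise_disjoint ht (fun _ : Unit => LinearMap.range f)
    (fun _ => (LinearMap.finrank_range_of_inj hf).trans (finrank_fin_fun K))
    Subsingleton.pairwise
  rwa [Fintype.card_unit] at this

theorem LinearMap.finrank_graph [FiniteDimensional K U] (f : U →ₗ[K] V) :
    finrank K f.graph = finrank K U := by
  rw [graph_eq_range_prod]
  exact finrank_range_of_inj fun x y hxy => congrArg Prod.fst hxy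

theorem LinearMap.disjoint_graph_graph {f g : U →ₗ[K] V} (hfg : Injective (f - g)) :
    Disjoint f.graph g.graph := by
  rw [Submodule.disjoint_def]
  rintro ⟨x, y⟩ hf hg
  simp only [mem_graph_iff] at hf hg
  obtain rfl : x = 0 := hfg (by simp [← hf, ← hg])
  simp [hf]

theorem LinearMap.disjoint_ker_fst_graph (f : U →ₗ[K] V) : Disjoint (ker (fst K U V)) f.graph := by
  rw [Submodule.disjoint_def]
  rintro ⟨x, y⟩ hfst hf
  simp only [mem_ker, fst_apply] at hfst
  subst hfst
  simp only [mem_graph_iff, map_zero] at hf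
  simp [hf]

theorem HasPartialSpread.prod_graphs [FiniteDimensional K U] {L : Type*} [Fintype L]
    (f : L → U →ₗ[K] V) (hf : Pairwise fun a b => Injective (f a - f b))
    (ht : 0 < t) (hU : finrank K U = t) (h : HasPartialSpread K V t N) :
    HasPartialSpread K (U × V) t (N + Fintype.card L) := by
  obtain ⟨S, hcard, hrank, hdisj⟩ := h
  let Φ : S ⊕ L → Submodule K (U × V) :=
    Sum.elim (fun W => (W : Submodule K V).map (LinearMap.inr K U V)) (fun a => (f a).graph)
  have hold : ∀ W : S, Φ (.inl W) ≤ LinearMap.ker (LinearMap.fst K U V) := fun W =>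
    le_trans LinearMap.map_le_range (LinearMap.range_inr K U V).le
  have hΦ : Pairwise (Disjoint on Φ) := by
    rintro (W₁ | a) (W₂ | b) hne
    · exact Submodule.disjoint_map LinearMap.inr_injective <| disjoint_iff.mpr <|
        hdisj W₁.2 W₂.2 (Subtype.coe_ne_coe.mpr fun h => hne (congrArg _ h))
    · exact (f b).disjoint_ker_fst_graph.mono_left (hold W₁)
    · exact ((f a).disjoint_ker_fst_graph.mono_left (hold W₂)).symm
    · exact LinearMap.disjoint_graph_graph (hf fun h => hne (congrArg _ h))
  have hrankΦ : ∀ i, finrank K (Φ i) = t := by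
    rintro (W | a)
    · exact (Submodule.equivMapOfInjective _ LinearMap.inr_injective _).finrank_eq.symm.trans
        (hrank W W.2)
    · exact (f a).finrank_graph.trans hU
  have := hasPartialSpread_of_pairwise_disjoint ht Φ hrankΦ hΦ
  rwa [Fintype.card_sum, Fintype.card_coe, hcard] at this

theorem pairwise_injective_sub_mulLeft_comp {L : Type*} [Field L] [Algebra K L]
    {κ : U →ₗ[K] L} (hκ : Injective κ) :
    Pairwise fun a b : L => Injective (LinearMap.mulLeft K a ∘ₗ κ - LinearMap.mulLeft K b ∘ₗ κ) := by
  intro a b hab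
  rw [injective_iff_map_eq_zero]
  intro x hx
  simp only [LinearMap.sub_apply, LinearMap.comp_apply, LinearMap.mulLeft_apply, ← sub_mul] at hx
  exact (hκ.eq_iff' (map_zero κ)).mp ((mul_eq_zero.mp hx).resolve_left (sub_ne_zero.mpr hab))

end General

section GaloisField

variable {q : ℕ} [Fact q.Prime] {t N : ℕ}

theorem HasPartialSpread.extend {V V' : Type*} [AddCommGroup V] [Module (ZMod q) V]
    [FiniteDimensional (ZMod q) V] [AddCommGroup V'] [Module (ZMod q) V']
    [FiniteDimensional (ZMod q) V'] (ht : 0 < t) (htV : t ≤ finrank (ZMod q) V)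
    (hV' : finrank (ZMod q) V' = finrank (ZMod q) V + t) (h : HasPartialSpread (ZMod q) V t N) :
    HasPartialSpread (ZMod q) V' t (N + q ^ finrank (ZMod q) V) := by
  set m := finrank (ZMod q) V
  have hm : m ≠ 0 := by omega
  have hL : finrank (ZMod q) (GaloisField q m) = m := GaloisField.finrank q hm
  let _ : Fintype (GaloisField q m) := Fintype.ofFinite _
  obtain ⟨κ, hκ⟩ := (finrank_le_iff_exists_linearMap (R := ZMod q) (M := Fin t → ZMod q)
    (M' := GaloisField q m)).mp (by rwa [finrank_fin_fun, hL])
  have := (h.of_finrank_eq hL.symm ht).prod_graphs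
    (fun a => LinearMap.mulLeft (ZMod q) a ∘ₗ κ) (pairwise_injective_sub_mulLeft_comp hκ) ht
    (finrank_fin_fun _)
  rw [← Nat.card_eq_fintype_card, GaloisField.card q m hm] at this
  exact this.of_finrank_eq (by rw [finrank_prod, finrank_fin_fun, hL, hV', add_comm]) ht

theorem hasPartialSpread_fin_succ_mul_add (ht : 0 < t) (r j : ℕ) :
    HasPartialSpread (ZMod q) (Fin ((j + 1) * t + r) → ZMod q) t
      (q ^ r * ∑ i ∈ range j, (q ^ t) ^ (i + 1) + 1) := by
  induction j with
  | zero => simpa using hasPartialSpread_one ht (by rw [finrank_fin_fun]; omega)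
  | succ j ih =>
    have hfin (n : ℕ) : finrank (ZMod q) (Fin n → ZMod q) = n := finrank_fin_fun _
    have := ih.extend (V' := Fin ((j + 1 + 1) * t + r) → ZMod q) ht
      (by rw [hfin]; nlinarith) (by rw [hfin, hfin]; ring)
    rw [hfin] at this
    convert this using 1
    rw [sum_range_succ]
    ring

end GaloisField

theorem pow_mul_sum_pow_succ_add_one {q t : ℕ} (hq : 2 ≤ q) (ht : 0 < t) (r j : ℕ) :
    q ^ r * ∑ i ∈ range j, (q ^ t) ^ (i + 1) + 1
      = q ^ r * ((q ^ ((j + 1) * t) - 1) / (q ^ t - 1)) - q ^ r + 1 := by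
  have hqt : 2 ≤ q ^ t := le_trans hq (Nat.le_self_pow ht.ne' q)
  rw [mul_comm (j + 1) t, pow_mul, ← Nat.geomSum_eq hqt, sum_range_succ', pow_zero, mul_add,
    mul_one, Nat.add_sub_cancel]

theorem partial_spread_exists_general
    (p t k r : ℕ) (hk : 1 ≤ k) (hrt : r < t)
    (hp : p = k * t + r) :
    ∃ S : Finset (Submodule (ZMod 2) (Fin p → ZMod 2)),
      S.card = 2 ^ r * ((2 ^ (k * t) - 1) / (2 ^ t - 1)) - 2 ^ r + 1 ∧
      (∀ W ∈ S, Module.finrank (ZMod 2) W = t) ∧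
      (↑S : Set (Submodule (ZMod 2) (Fin p → ZMod 2))).Pairwise
        (fun W₁ W₂ => W₁ ⊓ W₂ = ⊥) := by
  have ht : 0 < t := by omega
  obtain ⟨j, rfl⟩ : ∃ j, k = j + 1 := ⟨k - 1, by omega⟩
  subst hp
  rw [← pow_mul_sum_pow_succ_add_one le_rfl ht]
  exact hasPartialSpread_fin_succ_mul_add ht r j

/-- Eisfeld–Storme: for p = kt + r with 0 < r < t < p and k ≥ 1, there exists a
partial (t-1)-spread of PG(p-1,2) of size 2^r (2^{kt}-1)/(2^t-1) - 2^r + 1. -/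
theorem partial_spread_exists
    (p t k r : ℕ) (hk : 1 ≤ k) (hr : 0 < r) (hrt : r < t) (htp : t < p)
    (hp : p = k * t + r) :
    ∃ S : Finset (Submodule (ZMod 2) (Fin p → ZMod 2)),
      S.card = 2 ^ r * ((2 ^ (k * t) - 1) / (2 ^ t - 1)) - 2 ^ r + 1 ∧
      (∀ W ∈ S, Module.finrank (ZMod 2) W = t) ∧
      (↑S : Set (Submodule (ZMod 2) (Fin p → ZMod 2))).Pairwise
        (fun W₁ W₂ => W₁ ⊓ W₂ = ⊥) :=
  partial_spread_exists_general p t k r hk hrt hp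
end

section
/- Let p be odd, p = 2k + 1 with k ≥ 1, and t = 2. Then the maximum number of pairwise disjoint 2-dimensional linear subspaces of GF(2)^p (pairwise intersection {0}) is exactly (2^p - 5)/3. -/
/-!
Upper bound: the nonzero vectors of a subspace of dimension at least 2 over GF(2) sum to zero
(they are the nonzero elements of a copy of GF(2^d)). Hence the nonzero vectors of GF(2)^p not
covered by n disjoint lines also sum to zero, so there cannot be exactly one; their number
2^p - 1 - 3n is 1 mod 3 for p odd, hence at least 4.

Lower bound: if M is an endomorphism of V without eigenvalues, e.g. multiplication by some
ω ∉ GF(2) on GF(2^m), the 2^m lines {(a • v + b • M v, a, b)}, v ∈ V, of V × GF(2)^2 are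
pairwise disjoint and disjoint from V × 0. So a partial spread of V extends by 2^m lines to one of
V × GF(2)^2, and induction starts from a single line in dimension 3.
-/

open Module Finset Function

section General

variable {K V W : Type*} [Field K] [AddCommGroup V] [Module K V] [AddCommGroup W] [Module K W]

theorem exists_submodule_finrank_eq {n : ℕ} (hn : n ≤ finrank K V) :
    ∃ L : Submodule K V, finrank K L = n :=
  let ⟨f, hf⟩ := exists_linearIndependent_of_le_finrank hn
  ⟨Submodule.span K (Set.range f), by rw [finrank_span_eq_card hf, Fintype.card_fin]⟩

structure IsPartialLineSpread (S : Finset (Submodule K V)) : Prop where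
  finrank_eq_two : ∀ L ∈ S, finrank K L = 2
  pairwise_inf_eq_bot : (S : Set (Submodule K V)).Pairwise fun L₁ L₂ => L₁ ⊓ L₂ = ⊥

namespace IsPartialLineSpread

variable {S T : Finset (Submodule K V)}

theorem ne_bot (hS : IsPartialLineSpread S) {L : Submodule K V} (hL : L ∈ S) : L ≠ ⊥ := by
  rintro rfl
  simpa using hS.finrank_eq_two ⊥ hL

theorem disjoint_of_inf_eq_bot (hS : IsPartialLineSpread S)
    (h : ∀ L ∈ S, ∀ L' ∈ T, L ⊓ L' = ⊥) : Disjoint S T :=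
  Finset.disjoint_left.2 fun L hL hL' => hS.ne_bot hL (by simpa using h L hL L hL')

theorem union [DecidableEq (Submodule K V)] (hS : IsPartialLineSpread S)
    (hT : IsPartialLineSpread T) (h : ∀ L ∈ S, ∀ L' ∈ T, L ⊓ L' = ⊥) :
    IsPartialLineSpread (S ∪ T) where
  finrank_eq_two L hL := (Finset.mem_union.1 hL).elim (hS.finrank_eq_two L) (hT.finrank_eq_two L)
  pairwise_inf_eq_bot := by
    rw [Finset.coe_union, Set.pairwise_union]
    exact ⟨hS.pairwise_inf_eq_bot, hT.pairwise_inf_eq_bot,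
      fun L hL L' hL' _ => ⟨h L hL L' hL', inf_comm L L' ▸ h L hL L' hL'⟩⟩

theorem image_map [DecidableEq (Submodule K W)] (hS : IsPartialLineSpread S) {f : V →ₗ[K] W}
    (hf : Injective f) : IsPartialLineSpread (S.image (Submodule.map f)) where
  finrank_eq_two := by
    simp only [Finset.forall_mem_image]
    intro L hL
    rw [← (Submodule.equivMapOfInjective f hf L).finrank_eq, hS.finrank_eq_two L hL]
  pairwise_inf_eq_bot := by
    rw [Finset.coe_image, (Submodule.map_injective_of_injective hf).injOn.pairwise_image]
    intro L₁ hL₁ L₂ hL₂ hne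
    simp only [onFun, ← Submodule.map_inf f hf, hS.pairwise_inf_eq_bot hL₁ hL₂ hne,
      Submodule.map_bot]

end IsPartialLineSpread

variable (M : Module.End K V)

def lineEmbedding (v : V) : K × K →ₗ[K] V × K × K :=
  ((LinearMap.fst K K K).smulRight v + (LinearMap.snd K K K).smulRight (M v)).prod LinearMap.id

@[simp]
theorem lineEmbedding_apply (v : V) (x : K × K) :
    lineEmbedding M v x = (x.1 • v + x.2 • M v, x) := rfl

theorem lineEmbedding_injective (v : V) : Injective (lineEmbedding M v) :=
  fun _ _ h => (Prod.ext_iff.1 h).2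

theorem finrank_range_lineEmbedding (v : V) :
    finrank K (LinearMap.range (lineEmbedding M v)) = 2 := by
  rw [LinearMap.finrank_range_of_inj (lineEmbedding_injective M v)]
  simp

variable {M}

theorem eq_zero_of_apply_eq_smul (hM : ∀ c, ¬ M.HasEigenvalue c) {c : K} {u : V}
    (h : M u = c • u) : u = 0 := by
  by_contra hu
  exact hM c <|
    Module.End.hasEigenvalue_of_hasEigenvector ⟨Module.End.mem_eigenspace_iff.2 h, hu⟩

theorem lineEmbedding_eq_iff (hM : ∀ c, ¬ M.HasEigenvalue c) {v w : V} {x y : K × K} :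
    lineEmbedding M v x = lineEmbedding M w y ↔ x = y ∧ (x = 0 ∨ v = w) := by
  constructor
  · intro h
    obtain ⟨h₁, rfl⟩ := Prod.ext_iff.1 h
    refine ⟨rfl, ?_⟩
    have hrel : x.1 • (v - w) + x.2 • M (v - w) = 0 := by
      simp only [map_sub, smul_sub]
      simp only [lineEmbedding_apply] at h₁
      rw [← sub_eq_zero] at h₁
      rw [← h₁]; abel
    by_cases hx₂ : x.2 = 0
    · rw [hx₂, zero_smul, add_zero, smul_eq_zero, sub_eq_zero] at hrel
      exact hrel.imp (fun hx₁ => Prod.ext hx₁ hx₂) id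
    · refine Or.inr (sub_eq_zero.1 (eq_zero_of_apply_eq_smul hM (c := -(x.1 / x.2)) ?_))
      rw [neg_smul, eq_neg_iff_add_eq_zero, ← smul_right_inj hx₂, smul_add, smul_smul,
        mul_div_cancel₀ _ hx₂, smul_zero, add_comm, hrel]
  · rintro ⟨rfl, rfl | rfl⟩ <;> simp

theorem range_lineEmbedding_inf_eq_bot (hM : ∀ c, ¬ M.HasEigenvalue c) {v w : V}
    (hvw : v ≠ w) :
    LinearMap.range (lineEmbedding M v) ⊓ LinearMap.range (lineEmbedding M w) = ⊥ := by
  rw [eq_bot_iff]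
  rintro _ ⟨⟨x, rfl⟩, ⟨y, hyx⟩⟩
  obtain ⟨rfl, hy | rfl⟩ := (lineEmbedding_eq_iff hM).1 hyx
  · simp [hy]
  · exact absurd rfl hvw

theorem range_lineEmbedding_injective (hM : ∀ c, ¬ M.HasEigenvalue c) :
    Injective fun v => LinearMap.range (lineEmbedding M v) := by
  intro v w (h : LinearMap.range _ = LinearMap.range _)
  obtain ⟨y, hy⟩ : lineEmbedding M v (1, 0) ∈ LinearMap.range (lineEmbedding M w) :=
    h ▸ LinearMap.mem_range_self _ _
  obtain ⟨rfl, h10 | rfl⟩ := (lineEmbedding_eq_iff hM).1 hy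
  · simp at h10
  · rfl

theorem range_inl_inf_range_lineEmbedding (v : V) :
    LinearMap.range (LinearMap.inl K V (K × K)) ⊓ LinearMap.range (lineEmbedding M v) = ⊥ := by
  rw [eq_bot_iff]
  rintro _ ⟨⟨u, rfl⟩, ⟨x, hx⟩⟩
  obtain rfl : x = 0 := (Prod.ext_iff.1 hx).2
  simpa using hx.symm

theorem IsPartialLineSpread.exists_prod [Fintype V] (hM : ∀ c, ¬ M.HasEigenvalue c)
    {S : Finset (Submodule K V)} (hS : IsPartialLineSpread S) :
    ∃ T : Finset (Submodule K (V × K × K)),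
      IsPartialLineSpread T ∧ #T = #S + Fintype.card V := by
  classical
  let lines := (univ : Finset V).image fun v => LinearMap.range (lineEmbedding M v)
  have hlines : IsPartialLineSpread lines := by
    refine ⟨by simpa [lines] using finrank_range_lineEmbedding M, ?_⟩
    rw [coe_image, (range_lineEmbedding_injective hM).injOn.pairwise_image]
    exact fun v _ w _ hvw => range_lineEmbedding_inf_eq_bot hM hvw
  have hinl := hS.image_map (LinearMap.inl_injective (R := K) (M := V) (M₂ := K × K))
  have hdisj : ∀ L ∈ S.image (Submodule.map (LinearMap.inl K V (K × K))), ∀ L' ∈ lines,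
      L ⊓ L' = ⊥ := by
    simp only [forall_mem_image, lines, mem_univ, true_imp_iff]
    intro L _ v
    exact eq_bot_mono (inf_le_inf_right _ (LinearMap.map_le_range))
      (range_inl_inf_range_lineEmbedding v)
  refine ⟨_, hinl.union hlines hdisj, ?_⟩
  rw [card_union_of_disjoint (hinl.disjoint_of_inf_eq_bot hdisj),
    card_image_of_injective _ (Submodule.map_injective_of_injective LinearMap.inl_injective),
    card_image_of_injective _ (range_lineEmbedding_injective hM), card_univ]

theorem not_hasEigenvalue_mulLeft {L : Type*} [Field L] [Algebra K L] {ω : L}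
    (hω : ω ∉ Set.range (algebraMap K L)) (c : K) :
    ¬ Module.End.HasEigenvalue (LinearMap.mulLeft K ω) c := by
  intro h
  obtain ⟨x, hx, hx0⟩ := h.exists_hasEigenvector
  rw [Module.End.mem_eigenspace_iff, LinearMap.mulLeft_apply, Algebra.smul_def] at hx
  exact hω ⟨c, (mul_right_cancel₀ hx0 hx).symm⟩

end General

section ZModTwo

variable {V W : Type*} [AddCommGroup V] [Module (ZMod 2) V] [AddCommGroup W] [Module (ZMod 2) W]

theorem sum_univ_eq_zero_of_two_le_finrank [Fintype V] (hV : 2 ≤ finrank (ZMod 2) V) :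
    ∑ v : V, v = 0 := by
  set n := finrank (ZMod 2) V
  have : Fintype (GaloisField 2 n) := Fintype.ofFinite _
  let e : V ≃ₗ[ZMod 2] GaloisField 2 n :=
    LinearEquiv.ofFinrankEq _ _ (GaloisField.finrank 2 (by omega)).symm
  have hq : 1 < Fintype.card (GaloisField 2 n) - 1 := by
    rw [Fintype.card_eq_nat_card, GaloisField.card 2 n (by omega)]
    have := Nat.pow_le_pow_right two_pos hV
    omega
  calc ∑ v : V, v = e.symm (∑ x : GaloisField 2 n, x) := by
        rw [map_sum]; exact (e.symm.toEquiv.sum_comp _).symm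
    _ = 0 := by simpa using congrArg e.symm (FiniteField.sum_pow_lt_card_sub_one _ 1 hq)

open Classical in
noncomputable def Submodule.nonzeroPoints [Fintype V] (L : Submodule (ZMod 2) V) : Finset V :=
  {v | v ∈ L ∧ v ≠ 0}

namespace Submodule

variable [Fintype V] {L : Submodule (ZMod 2) V}

theorem mem_nonzeroPoints {v : V} : v ∈ L.nonzeroPoints ↔ v ∈ L ∧ v ≠ 0 := by
  simp [nonzeroPoints]

theorem mem_insert_zero_nonzeroPoints [DecidableEq V] {v : V} :
    v ∈ insert 0 L.nonzeroPoints ↔ v ∈ L := by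
  rw [mem_insert, mem_nonzeroPoints]
  by_cases hv : v = 0 <;> simp [hv]

theorem card_nonzeroPoints : #L.nonzeroPoints + 1 = 2 ^ finrank (ZMod 2) L := by
  classical
  rw [← card_insert_of_notMem fun h => (mem_nonzeroPoints.1 h).2 rfl,
    ← Fintype.card_of_subtype _ fun _ => mem_insert_zero_nonzeroPoints,
    Module.card_eq_pow_finrank (K := ZMod 2), ZMod.card]

theorem sum_nonzeroPoints (hL : 2 ≤ finrank (ZMod 2) L) : ∑ v ∈ L.nonzeroPoints, v = 0 := by
  classical
  have h0 := sum_insert (s := L.nonzeroPoints) (f := fun v => v)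
    fun h => (mem_nonzeroPoints.1 h).2 rfl
  rw [zero_add, sum_subtype (p := (· ∈ L)) _ fun _ => mem_insert_zero_nonzeroPoints] at h0
  rw [← h0, ← Submodule.coe_sum, sum_univ_eq_zero_of_two_le_finrank hL, Submodule.coe_zero]

end Submodule

namespace IsPartialLineSpread

variable {S : Finset (Submodule (ZMod 2) V)}

theorem exists_uncovered [Fintype V] [DecidableEq V] (hV : 2 ≤ finrank (ZMod 2) V)
    (hS : IsPartialLineSpread S) :
    ∃ H : Finset V, 0 ∉ H ∧ ∑ v ∈ H, v = 0 ∧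
      #H + 3 * #S + 1 = 2 ^ finrank (ZMod 2) V := by
  have hdisj : (S : Set (Submodule (ZMod 2) V)).PairwiseDisjoint Submodule.nonzeroPoints := by
    intro L hL L' hL' hne
    refine disjoint_left.2 fun v hv hv' => (Submodule.mem_nonzeroPoints.1 hv).2 ?_
    rw [← Submodule.mem_bot (ZMod 2), ← hS.pairwise_inf_eq_bot hL hL' hne]
    exact ⟨(Submodule.mem_nonzeroPoints.1 hv).1, (Submodule.mem_nonzeroPoints.1 hv').1⟩
  let covered := S.biUnion Submodule.nonzeroPoints
  have hsub : covered ⊆ (⊤ : Submodule (ZMod 2) V).nonzeroPoints :=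
    biUnion_subset.2 fun L _ v hv =>
      Submodule.mem_nonzeroPoints.2 ⟨trivial, (Submodule.mem_nonzeroPoints.1 hv).2⟩
  have hcovered : ∑ v ∈ covered, v = 0 := by
    rw [sum_biUnion hdisj]
    exact sum_eq_zero fun L hL =>
      Submodule.sum_nonzeroPoints (hS.finrank_eq_two L hL).ge
  have hcard : #covered = 3 * #S := by
    rw [card_biUnion hdisj, sum_congr rfl fun L hL => ?_, sum_const, smul_eq_mul, mul_comm]
    have := Submodule.card_nonzeroPoints (L := L)
    rw [hS.finrank_eq_two L hL] at this
    omega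
  have htop := Submodule.card_nonzeroPoints (L := (⊤ : Submodule (ZMod 2) V))
  rw [finrank_top] at htop
  refine ⟨(⊤ : Submodule (ZMod 2) V).nonzeroPoints \ covered,
    fun h => (Submodule.mem_nonzeroPoints.1 (mem_sdiff.1 h).1).2 rfl, ?_, ?_⟩
  · have := sum_sdiff (f := fun v => v) hsub
    rwa [hcovered, add_zero, Submodule.sum_nonzeroPoints (by rwa [finrank_top])] at this
  · rw [card_sdiff_of_subset hsub]
    have := card_le_card hsub
    omega

theorem three_mul_card_add_five_le [Fintype V] (hV : 2 ≤ finrank (ZMod 2) V)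
    (hodd : Odd (finrank (ZMod 2) V)) (hS : IsPartialLineSpread S) :
    3 * #S + 5 ≤ 2 ^ finrank (ZMod 2) V := by
  classical
  obtain ⟨H, hH0, hHsum, hHcard⟩ := hS.exists_uncovered hV
  have hH1 : #H ≠ 1 := by
    intro h
    obtain ⟨v, rfl⟩ := card_eq_one.1 h
    exact hH0 (by simpa using hHsum.symm)
  have hmod : 2 ^ finrank (ZMod 2) V % 3 = 2 := by
    obtain ⟨k, hk⟩ := hodd
    rw [hk, pow_succ, pow_mul, Nat.mul_mod, Nat.pow_mod]
    norm_num
  omega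

end IsPartialLineSpread

theorem IsPartialLineSpread.exists_of_finrank_eq_add_two {S : Finset (Submodule (ZMod 2) V)}
    (hS : IsPartialLineSpread S) (hV : 2 ≤ finrank (ZMod 2) V)
    (hW : finrank (ZMod 2) W = finrank (ZMod 2) V + 2) :
    ∃ T : Finset (Submodule (ZMod 2) W),
      IsPartialLineSpread T ∧ #T = #S + 2 ^ finrank (ZMod 2) V := by
  classical
  set n := finrank (ZMod 2) V
  have : FiniteDimensional (ZMod 2) V := Module.finite_of_finrank_pos (by omega)
  have : FiniteDimensional (ZMod 2) W := Module.finite_of_finrank_pos (by omega)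
  have : Fintype (GaloisField 2 n) := Fintype.ofFinite _
  have hL : finrank (ZMod 2) (GaloisField 2 n) = n := GaloisField.finrank 2 (by omega)
  let e₁ : V ≃ₗ[ZMod 2] GaloisField 2 n := LinearEquiv.ofFinrankEq _ _ hL.symm
  let e₂ : (GaloisField 2 n × ZMod 2 × ZMod 2) ≃ₗ[ZMod 2] W :=
    LinearEquiv.ofFinrankEq _ _ (by simp [hL, hW])
  obtain ⟨ω, hω⟩ : ∃ ω : GaloisField 2 n, ω ∉ Set.range (algebraMap (ZMod 2) _) := by
    by_contra! h
    have := Algebra.finrank_eq_one_iff_bijective_algebraMap.2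
      ⟨(algebraMap (ZMod 2) (GaloisField 2 n)).injective, h⟩
    omega
  obtain ⟨T, hT, hcard⟩ :=
    (hS.image_map e₁.injective).exists_prod (not_hasEigenvalue_mulLeft hω)
  refine ⟨T.image (Submodule.map (e₂ : _ →ₗ[ZMod 2] W)), hT.image_map e₂.injective, ?_⟩
  rw [card_image_of_injective _ (Submodule.map_injective_of_injective e₂.injective), hcard,
    card_image_of_injective _ (Submodule.map_injective_of_injective e₁.injective),
    Fintype.card_eq_nat_card, GaloisField.card 2 n (by omega)]

theorem exists_isPartialLineSpread_three_mul_card_add_five_eq {k : ℕ} (hk : 1 ≤ k)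
    (hV : finrank (ZMod 2) V = 2 * k + 1) :
    ∃ S : Finset (Submodule (ZMod 2) V),
      IsPartialLineSpread S ∧ 3 * #S + 5 = 2 ^ (2 * k + 1) := by
  induction k, hk using Nat.le_induction generalizing V with
  | base =>
    obtain ⟨L, hL⟩ := exists_submodule_finrank_eq (K := ZMod 2) (V := V) (n := 2) (by omega)
    exact ⟨{L}, ⟨by simpa using hL, by simp⟩, by simp⟩
  | succ k hk ih =>
    obtain ⟨U, hU⟩ :=
      exists_submodule_finrank_eq (K := ZMod 2) (V := V) (n := 2 * k + 1) (by omega)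
    obtain ⟨S, hS, hcard⟩ := ih hU
    obtain ⟨T, hT, hTcard⟩ := hS.exists_of_finrank_eq_add_two (by omega) (hV.trans (by omega))
    refine ⟨T, hT, ?_⟩
    rw [hTcard, hU, show 2 ^ (2 * (k + 1) + 1) = 4 * 2 ^ (2 * k + 1) by ring]
    omega

end ZModTwo

/-- For odd p = 2k+1, the maximum number of pairwise disjoint 2-dimensional
subspaces of GF(2)^p is exactly (2^p - 5)/3. -/
theorem max_partial_line_spread
    (p k : ℕ) (hk : 1 ≤ k) (hp : p = 2 * k + 1) :
    IsGreatest
      {n : ℕ | ∃ S : Finset (Submodule (ZMod 2) (Fin p → ZMod 2)),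
        S.card = n ∧
        (∀ W ∈ S, Module.finrank (ZMod 2) W = 2) ∧
        (↑S : Set (Submodule (ZMod 2) (Fin p → ZMod 2))).Pairwise
          (fun W₁ W₂ => W₁ ⊓ W₂ = ⊥)}
      ((2 ^ p - 5) / 3) := by
  subst hp
  have hfin : finrank (ZMod 2) (Fin (2 * k + 1) → ZMod 2) = 2 * k + 1 := Module.finrank_fin_fun _
  constructor
  · obtain ⟨S, hS, hcard⟩ := exists_isPartialLineSpread_three_mul_card_add_five_eq hk hfin
    exact ⟨S, by omega, hS.finrank_eq_two, hS.pairwise_inf_eq_bot⟩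
  · rintro _ ⟨S, rfl, hdim, hdisj⟩
    have := IsPartialLineSpread.three_mul_card_add_five_le (by omega)
      (by rw [hfin]; exact odd_two_mul_add_one k) ⟨hdim, hdisj⟩
    rw [hfin] at this
    omega
end

section
/- Let X be an n × n real matrix with X^T X = n·I_n, and Σ_y = σ²·I_n + Σ_{i=1}^m σ_i²·N_i N_i^T where each N_i is an n × 2^{t_i} zero-one incidence matrix with exactly one 1 per row and n_i = n/2^{t_i} ones per column. Suppose columns c_j and c_k of X (j ≠ k) satisfy: for each i, either c_j^T N_i = 0 or c_j = N_i a_j^{(i)} for some vector a_j^{(i)} (and similarly for c_k). Then the (j,k) entry of X^T Σ_y X equals 0; i.e., the estimators of distinct factorial effects are uncorrelated. -/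
/-!
Expanding `Σ_y`, the `(j, k)` entry of `Xᵀ Σ_y X` is `σ² c_jᵀ c_k + Σ_i σ_i² (N_iᵀ c_j) ⬝ (N_iᵀ c_k)`.
The first term vanishes because distinct columns of `X` are orthogonal. For each `i`, either
`N_iᵀ c_j = 0`, or `c_j = N_i a` and then, since `N_iᵀ N_i = n_i I`,
`(N_iᵀ c_j) ⬝ (N_iᵀ c_k) = n_i a ⬝ N_iᵀ c_k = n_i c_jᵀ c_k = 0`.
-/

open Matrix

namespace Matrix

variable {ι κ R : Type*} [Fintype ι]

theorem transpose_mul_self_of_incidence [NonAssocSemiring R] [DecidableEq κ]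
    (N : Matrix ι κ R) (h01 : ∀ r l, N r l = 0 ∨ N r l = 1) (hrow : ∀ r, ∃! l, N r l = 1)
    {c : ℕ} (hcol : ∀ l, Nat.card {r // N r l = 1} = c) :
    Nᵀ * N = (c : R) • 1 := by
  classical
  ext l l'
  rw [mul_apply, Matrix.smul_apply, one_apply]
  by_cases hll' : l = l'
  · subst hll'
    have hsq : ∀ r, N r l * N r l = if N r l = 1 then 1 else 0 := fun r => by
      rcases h01 r l with h | h <;> simp [h]
    simp_rw [transpose_apply, hsq, Finset.sum_boole, if_true, smul_eq_mul, mul_one]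
    rw [← hcol l, Nat.card_eq_fintype_card, Fintype.card_subtype]
  · rw [if_neg hll', smul_zero]
    refine Finset.sum_eq_zero fun r _ => ?_
    rcases h01 r l with h | h
    · simp [h]
    rcases h01 r l' with h' | h'
    · simp [h']
    exact absurd ((hrow r).unique h h') hll'

variable [Fintype κ] [CommSemiring R]

theorem transpose_mul_mul_transpose_mul_apply {ι' : Type*} (A : Matrix ι ι' R)
    (B : Matrix ι ι' R) (N : Matrix ι κ R) (j k : ι') :
    (Aᵀ * (N * Nᵀ) * B) j k = (Aᵀ j ᵥ* N) ⬝ᵥ (Bᵀ k ᵥ* N) := by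
  rw [← Matrix.mul_assoc, Matrix.mul_assoc, ← transpose_transpose (Nᵀ * B), transpose_mul,
    transpose_transpose, mul_apply']
  rfl

theorem vecMul_dotProduct_vecMul_eq_zero [DecidableEq κ] {N : Matrix ι κ R} {c : R}
    (hN : Nᵀ * N = c • 1) {u v : ι → R} (huv : u ⬝ᵥ v = 0) {a : κ → R} (ha : u = N *ᵥ a) :
    (u ᵥ* N) ⬝ᵥ (v ᵥ* N) = 0 := by
  have hu : u ᵥ* N = c • a := by
    rw [ha, ← mulVec_transpose, mulVec_mulVec, hN, smul_mulVec, one_mulVec]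
  rw [hu, smul_dotProduct, ← mulVec_transpose, dotProduct_mulVec, vecMul_transpose, ← ha, huv,
    smul_zero]

end Matrix

theorem effect_estimators_uncorrelated_general
    (n m : ℕ) (t : Fin m → ℕ)
    (X : Matrix (Fin n) (Fin n) ℝ)
    (hX : Xᵀ * X = (n : ℝ) • (1 : Matrix (Fin n) (Fin n) ℝ))
    (N : (i : Fin m) → Matrix (Fin n) (Fin (2 ^ t i)) ℝ)
    (h01 : ∀ i r l, N i r l = 0 ∨ N i r l = 1)
    (hrow : ∀ i (r : Fin n), ∃! l, N i r l = 1)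
    (hcol : ∀ i (l : Fin (2 ^ t i)),
      Nat.card {r : Fin n // N i r l = 1} = n / 2 ^ t i)
    (σ : ℝ) (σi : Fin m → ℝ)
    (Sy : Matrix (Fin n) (Fin n) ℝ)
    (hSy : Sy = σ ^ 2 • (1 : Matrix (Fin n) (Fin n) ℝ) +
      ∑ i : Fin m, σi i ^ 2 • (N i * (N i)ᵀ))
    (j k : Fin n) (hjk : j ≠ k)
    (hj : ∀ i : Fin m,
      (fun r => X r j) ᵥ* N i = 0 ∨ ∃ a, (fun r => X r j) = N i *ᵥ a) :
    (Xᵀ * Sy * X) j k = 0 := by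
  have horth : Xᵀ j ⬝ᵥ Xᵀ k = 0 := by
    have h := congrFun (congrFun hX j) k
    rwa [mul_apply', Matrix.smul_apply, one_apply_ne hjk, smul_zero] at h
  have hterm : ∀ i, (Xᵀ * (N i * (N i)ᵀ) * X) j k = 0 := fun i => by
    rw [transpose_mul_mul_transpose_mul_apply]
    rcases hj i with hzero | ⟨a, ha⟩
    · exact hzero.symm ▸ zero_dotProduct _
    · exact vecMul_dotProduct_vecMul_eq_zero
        (transpose_mul_self_of_incidence (N i) (h01 i) (hrow i) (hcol i)) horth ha
  subst hSy
  simp [Matrix.mul_add, Matrix.add_mul, Matrix.mul_sum, Matrix.sum_mul, Matrix.sum_apply, hX, hterm,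
    hjk]

/-- Theorem 1: in a single-replicate factorial design with randomization
restrictions, the estimators of distinct factorial effects are uncorrelated:
the (j,k) entry of Xᵀ Σ_y X is zero. -/
theorem effect_estimators_uncorrelated
    (n m : ℕ) (t : Fin m → ℕ)
    (X : Matrix (Fin n) (Fin n) ℝ)
    (hX : Xᵀ * X = (n : ℝ) • (1 : Matrix (Fin n) (Fin n) ℝ))
    (N : (i : Fin m) → Matrix (Fin n) (Fin (2 ^ t i)) ℝ)
    (h01 : ∀ i r l, N i r l = 0 ∨ N i r l = 1)
    (hrow : ∀ i (r : Fin n), ∃! l, N i r l = 1)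
    (hcol : ∀ i (l : Fin (2 ^ t i)),
      Nat.card {r : Fin n // N i r l = 1} = n / 2 ^ t i)
    (σ : ℝ) (σi : Fin m → ℝ)
    (Sy : Matrix (Fin n) (Fin n) ℝ)
    (hSy : Sy = σ ^ 2 • (1 : Matrix (Fin n) (Fin n) ℝ) +
      ∑ i : Fin m, σi i ^ 2 • (N i * (N i)ᵀ))
    (j k : Fin n) (hjk : j ≠ k)
    (hj : ∀ i : Fin m,
      (fun r => X r j) ᵥ* N i = 0 ∨ ∃ a, (fun r => X r j) = N i *ᵥ a)
    (hk : ∀ i : Fin m,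
      (fun r => X r k) ᵥ* N i = 0 ∨ ∃ a, (fun r => X r k) = N i *ᵥ a) :
    (Xᵀ * Sy * X) j k = 0 :=
  effect_estimators_uncorrelated_general n m t X hX N h01 hrow hcol σ σi Sy hSy j k hjk hj
end

section
/- Let X be n × n with X^T X = n·I_n, and Σ_y = σ²·I_n + Σ_{i=1}^m σ_i²·N_i N_i^T with N_i as incidence matrices (one 1 per row, n_i = n/2^{t_i} ones per column). Let c be a column of X and T = {i : c lies in the column space of N_i} with c^T N_i = 0 for all i ∉ T. Then (1/n²)·c^T Σ_y c = σ²/n + Σ_{i∈T} (n_i/n)·σ_i². In particular, if T is empty the variance is σ²/n. -/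
/-!
Since `Xᵀ X = n I`, the column `c` has `cᵀ c = n`. An incidence matrix `Nᵢ` with one `1` per
row and `nᵢ` per column satisfies `Nᵢᵀ Nᵢ = nᵢ I`, so for `c = Nᵢ a` we get
`Nᵢ Nᵢᵀ c = Nᵢ (nᵢ a) = nᵢ c` and `cᵀ Nᵢ Nᵢᵀ c = n nᵢ`, while `cᵀ Nᵢ = 0` kills the `i`-th term.
-/

open Matrix

namespace Matrix

variable {ι κ R : Type*}

theorem dotProduct_col_self_of_transpose_mul_self_eq_smul_one [Fintype ι] [DecidableEq ι]
    [NonAssocSemiring R] {X : Matrix ι ι R} {s : R} (hX : Xᵀ * X = s • 1) (j : ι) :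
    (fun r => X r j) ⬝ᵥ (fun r => X r j) = s := by
  have h := congrFun (congrFun hX j) j
  rwa [mul_apply', smul_apply, one_apply_eq, smul_eq_mul, mul_one] at h

theorem transpose_mul_self_eq_diagonal_card [Fintype ι] [DecidableEq κ] [NonAssocSemiring R]
    {N : Matrix ι κ R} (h01 : ∀ r l, N r l = 0 ∨ N r l = 1)
    (hrow : ∀ r l l', N r l = 1 → N r l' = 1 → l = l') :
    Nᵀ * N = diagonal fun l => (Nat.card {r // N r l = 1} : R) := by
  classical
  ext l l'
  have hterm : ∀ r, N r l * N r l' = if N r l = 1 ∧ N r l' = 1 then 1 else 0 := fun r => by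
    rcases h01 r l with h | h <;> rcases h01 r l' with h' | h' <;> simp [h, h']
  rw [mul_apply]
  simp only [transpose_apply, hterm, Finset.sum_boole]
  by_cases hll : l = l'
  · subst hll
    simp [Nat.card_eq_fintype_card, Fintype.card_subtype]
  · have hdisj : ∀ r, ¬(N r l = 1 ∧ N r l' = 1) := fun r ⟨h, h'⟩ => hll (hrow r l l' h h')
    simp [hdisj, hll]

theorem dotProduct_mul_transpose_mulVec_of_eq_mulVec [Fintype ι] [Fintype κ] [DecidableEq κ]
    [CommSemiring R] {N : Matrix ι κ R} {k : R} (hN : Nᵀ * N = k • 1) {c : ι → R} {a : κ → R}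
    (hc : c = N *ᵥ a) : c ⬝ᵥ (N * Nᵀ) *ᵥ c = k * (c ⬝ᵥ c) := by
  have hc_eigen : (N * Nᵀ) *ᵥ c = k • c := by
    rw [hc, mulVec_mulVec, Matrix.mul_assoc, hN, Matrix.mul_smul, Matrix.mul_one, smul_mulVec]
  rw [hc_eigen, dotProduct_smul, smul_eq_mul]

theorem dotProduct_mul_transpose_mulVec_of_vecMul_eq_zero [Fintype ι] [Fintype κ]
    [CommSemiring R] {N : Matrix ι κ R} {c : ι → R} (hc : c ᵥ* N = 0) :
    c ⬝ᵥ (N * Nᵀ) *ᵥ c = 0 := by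
  rw [← mulVec_mulVec, mulVec_transpose, hc, mulVec_zero, dotProduct_zero]

end Matrix

theorem effect_estimator_variance_general
    (n m : ℕ) (t : Fin m → ℕ)
    (X : Matrix (Fin n) (Fin n) ℝ)
    (hX : Xᵀ * X = (n : ℝ) • (1 : Matrix (Fin n) (Fin n) ℝ))
    (N : (i : Fin m) → Matrix (Fin n) (Fin (2 ^ t i)) ℝ)
    (h01 : ∀ i r l, N i r l = 0 ∨ N i r l = 1)
    (hrow : ∀ i (r : Fin n), ∃! l, N i r l = 1)
    (hcol : ∀ i (l : Fin (2 ^ t i)),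
      Nat.card {r : Fin n // N i r l = 1} = n / 2 ^ t i)
    (σ : ℝ) (σi : Fin m → ℝ)
    (Sy : Matrix (Fin n) (Fin n) ℝ)
    (hSy : Sy = σ ^ 2 • (1 : Matrix (Fin n) (Fin n) ℝ) +
      ∑ i : Fin m, σi i ^ 2 • (N i * (N i)ᵀ))
    (j : Fin n) (c : Fin n → ℝ) (hc : c = fun r => X r j)
    (T : Finset (Fin m))
    (hT : ∀ i ∈ T, ∃ a, c = N i *ᵥ a)
    (hT' : ∀ i ∉ T, c ᵥ* N i = 0) :
    (1 / (n : ℝ) ^ 2) * (c ⬝ᵥ (Sy *ᵥ c)) =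
      σ ^ 2 / n + ∑ i ∈ T, ((n / 2 ^ t i : ℕ) / (n : ℝ)) * σi i ^ 2 := by
  have hcc : c ⬝ᵥ c = n := hc ▸ dotProduct_col_self_of_transpose_mul_self_eq_smul_one hX j
  have hNtN : ∀ i, (N i)ᵀ * N i = ((n / 2 ^ t i : ℕ) : ℝ) • 1 := fun i => by
    rw [transpose_mul_self_eq_diagonal_card (h01 i) fun r _ _ => (hrow i r).unique,
      smul_one_eq_diagonal]
    simp only [hcol]
  have hquad : ∀ i, c ⬝ᵥ (N i * (N i)ᵀ) *ᵥ c =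
      if i ∈ T then ((n / 2 ^ t i : ℕ) : ℝ) * n else 0 := fun i => by
    split_ifs with hi
    · obtain ⟨a, ha⟩ := hT i hi
      rw [dotProduct_mul_transpose_mulVec_of_eq_mulVec (hNtN i) ha, hcc]
    · exact dotProduct_mul_transpose_mulVec_of_vecMul_eq_zero (hT' i hi)
  have hSyc : c ⬝ᵥ (Sy *ᵥ c) = n * (σ ^ 2 + ∑ i ∈ T, ((n / 2 ^ t i : ℕ) : ℝ) * σi i ^ 2) := by
    simp only [hSy, add_mulVec, dotProduct_add, smul_mulVec, one_mulVec, dotProduct_smul,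
      sum_mulVec, dotProduct_sum, smul_eq_mul, hcc, hquad, mul_ite, mul_zero,
      Finset.sum_ite_mem, Finset.univ_inter]
    rw [mul_add, Finset.mul_sum]
    congr 1
    · ring
    · exact Finset.sum_congr rfl fun i _ => by ring
  -- for `n = 0` both sides are `0`, through the junk value `1 / 0 = 0`
  rcases eq_or_ne (n : ℝ) 0 with hn | hn
  · simp [hn]
  · simp_rw [hSyc, div_mul_eq_mul_div, ← Finset.sum_div]
    field_simp

/-- Theorem 2: the variance of the least squares estimator of a factorial
effect E with column c equals σ²/n plus the sum of (n_i/n)σ_i² over the stages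
i whose RDCSS contains E. -/
theorem effect_estimator_variance
    (n m : ℕ) (hn : 0 < n) (t : Fin m → ℕ)
    (X : Matrix (Fin n) (Fin n) ℝ)
    (hX : Xᵀ * X = (n : ℝ) • (1 : Matrix (Fin n) (Fin n) ℝ))
    (N : (i : Fin m) → Matrix (Fin n) (Fin (2 ^ t i)) ℝ)
    (h01 : ∀ i r l, N i r l = 0 ∨ N i r l = 1)
    (hrow : ∀ i (r : Fin n), ∃! l, N i r l = 1)
    (hcol : ∀ i (l : Fin (2 ^ t i)),
      Nat.card {r : Fin n // N i r l = 1} = n / 2 ^ t i)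
    (σ : ℝ) (σi : Fin m → ℝ)
    (Sy : Matrix (Fin n) (Fin n) ℝ)
    (hSy : Sy = σ ^ 2 • (1 : Matrix (Fin n) (Fin n) ℝ) +
      ∑ i : Fin m, σi i ^ 2 • (N i * (N i)ᵀ))
    (j : Fin n) (c : Fin n → ℝ) (hc : c = fun r => X r j)
    (T : Finset (Fin m))
    (hT : ∀ i ∈ T, ∃ a, c = N i *ᵥ a)
    (hT' : ∀ i ∉ T, c ᵥ* N i = 0) :
    (1 / (n : ℝ) ^ 2) * (c ⬝ᵥ (Sy *ᵥ c)) =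
      σ ^ 2 / n + ∑ i ∈ T, ((n / 2 ^ t i : ℕ) / (n : ℝ)) * σi i ^ 2 :=
  effect_estimator_variance_general n m t X hX N h01 hrow hcol σ σi Sy hSy j c hc T hT hT'
end

section
/- Let w be a primitive element of GF(2^p) so that the nonzero elements are w^0, w^1, ..., w^{2^p-2}, and suppose t divides p; set N = (2^p - 1)/(2^t - 1). Then for each j ∈ {0, 1, ..., N-1}, the set S_j = {w^{iN + j} : 0 ≤ i ≤ 2^t - 2} ∪ {0} is a t-dimensional GF(2)-linear subspace of GF(2^p), and the S_j for distinct j intersect only in 0. -/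
/-!
Write `q = 2 ^ t`. A primitive element `w` has order `N * (q - 1)`, so the nonzero roots of
`y ^ q = y` are exactly the `q - 1` powers `w ^ (i * N)`, and hence
`S_j = w ^ j • {y | y ^ q = y}`. The fixed points of the `t`-th power of Frobenius form a
subfield, so `S_j` is an additive subgroup, i.e. a `ZMod 2`-subspace. The exponents `i * N + j` with
`i < q - 1`, `j < N` are distinct residues modulo the order of `w`; this gives `|S_j| = q`, hence
dimension `t`, and `S_j ∩ S_j' = {0}` for `j ≠ j'`.
-/

open Pointwise

section Exponents

variable {G : Type*} [Monoid G] {g : G} {N d : ℕ}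

lemma mul_add_lt_mul {i j : ℕ} (hi : i < d) (hj : j < N) : i * N + j < N * d :=
  calc i * N + j < (i + 1) * N := by rw [add_one_mul]; exact Nat.add_lt_add_left hj _
    _ ≤ N * d := by rw [mul_comm]; exact Nat.mul_le_mul_left N hi

lemma eq_and_eq_of_pow_mul_add_eq (hord : orderOf g = N * d) {i i' j j' : ℕ} (hi : i < d)
    (hi' : i' < d) (hj : j < N) (hj' : j' < N) (h : g ^ (i * N + j) = g ^ (i' * N + j')) :
    i = i' ∧ j = j' := by
  have hexp : i * N + j = i' * N + j' :=
    pow_injOn_Iio_orderOf (by rw [Set.mem_Iio, hord]; exact mul_add_lt_mul hi hj)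
      (by rw [Set.mem_Iio, hord]; exact mul_add_lt_mul hi' hj') h
  have hjj' : j = j' := by
    rw [← Nat.mul_add_mod_of_lt hj, ← Nat.mul_add_mod_of_lt hj', hexp]
  subst hjj'
  exact ⟨Nat.eq_of_mul_eq_mul_right (by omega) (Nat.add_right_cancel hexp), rfl⟩

lemma pow_pow_eq_one_iff_exists_eq_pow_mul (hord : orderOf g = N * d) (hd : 0 < d) {a : ℕ} :
    (g ^ a) ^ d = 1 ↔ ∃ i < d, g ^ a = g ^ (i * N) := by
  have hgNd : g ^ (N * d) = 1 := hord ▸ pow_orderOf_eq_one g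
  constructor
  · intro h
    obtain ⟨c, rfl⟩ : N ∣ a := by
      rw [← pow_mul, ← orderOf_dvd_iff_pow_eq_one, hord] at h
      exact Nat.dvd_of_mul_dvd_mul_right hd h
    refine ⟨c % d, Nat.mod_lt c hd, ?_⟩
    conv_lhs => rw [← Nat.div_add_mod c d]
    rw [mul_add, pow_add, ← mul_assoc, pow_mul, hgNd, one_pow, one_mul, mul_comm]
  · rintro ⟨i, -, hi⟩
    rw [hi, ← pow_mul, mul_assoc, pow_mul', hgNd, one_pow]

end Exponents

variable {F : Type*} [Field F]

/-- The set `S_j` of the construction, with `q = 2 ^ t`. -/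
def spreadComponent (w : F) (q N j : ℕ) : Set F :=
  insert 0 {x | ∃ i ≤ q - 2, x = w ^ (i * N + j)}

section Spread

variable {w : F} {q N : ℕ}

lemma pow_eq_self_iff_eq_zero_or_exists_eq_pow_mul
    (hw : ∀ x : F, x ≠ 0 → ∃ i : ℕ, w ^ i = x) (hord : orderOf w = N * (q - 1)) (hq : 2 ≤ q)
    {y : F} :
    y ^ q = y ↔ y = 0 ∨ ∃ i < q - 1, y = w ^ (i * N) := by
  rcases eq_or_ne y 0 with rfl | hy
  · simp [zero_pow (by omega : q ≠ 0)]
  obtain ⟨a, rfl⟩ := hw y hy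
  have hsplit : (w ^ a) ^ q = (w ^ a) ^ (q - 1) * w ^ a := by
    rw [← pow_succ, Nat.sub_add_cancel (by omega)]
  rw [hsplit, mul_left_eq_self₀, or_iff_left hy,
    pow_pow_eq_one_iff_exists_eq_pow_mul hord (by omega), or_iff_right hy]

lemma spreadComponent_eq_smul (hw : ∀ x : F, x ≠ 0 → ∃ i : ℕ, w ^ i = x)
    (hord : orderOf w = N * (q - 1)) (hq : 2 ≤ q) (j : ℕ) :
    spreadComponent w q N j = w ^ j • {y : F | y ^ q = y} := by
  ext x
  simp only [spreadComponent, Set.mem_insert_iff, Set.mem_ofPred_eq, Set.mem_smul_set,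
    smul_eq_mul, pow_eq_self_iff_eq_zero_or_exists_eq_pow_mul hw hord hq]
  constructor
  · rintro (rfl | ⟨i, hi, rfl⟩)
    · exact ⟨0, Or.inl rfl, mul_zero _⟩
    · exact ⟨w ^ (i * N), Or.inr ⟨i, by omega, rfl⟩, by rw [← pow_add, add_comm]⟩
  · rintro ⟨y, rfl | ⟨i, hi, rfl⟩, rfl⟩
    · exact Or.inl (mul_zero _)
    · exact Or.inr ⟨i, by omega, by rw [← pow_add, add_comm]⟩

lemma spreadComponent_eq_coe_finset [DecidableEq F] (hq : 2 ≤ q) (j : ℕ) :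
    spreadComponent w q N j =
      ↑(insert 0 ((Finset.range (q - 1)).image fun i => w ^ (i * N + j))) := by
  ext x
  simp only [spreadComponent, Set.mem_insert_iff, Set.mem_ofPred_eq, Finset.coe_insert,
    Finset.coe_image, Finset.coe_range, Set.mem_image, Set.mem_Iio]
  constructor
  · rintro (h | ⟨i, hi, rfl⟩)
    · exact Or.inl h
    · exact Or.inr ⟨i, by omega, rfl⟩
  · rintro (h | ⟨i, hi, rfl⟩)
    · exact Or.inl h
    · exact Or.inr ⟨i, by omega, rfl⟩

lemma ncard_spreadComponent (hord : orderOf w = N * (q - 1)) (hq : 2 ≤ q) {j : ℕ} (hj : j < N) :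
    (spreadComponent w q N j).ncard = q := by
  classical
  have hw0 : w ≠ 0 := by
    rintro rfl
    rw [orderOf_zero] at hord
    exact absurd hord.symm (Nat.mul_ne_zero (by omega) (by omega))
  rw [spreadComponent_eq_coe_finset hq, Set.ncard_coe_finset, Finset.card_insert_of_notMem,
    Finset.card_image_of_injOn, Finset.card_range]
  · omega
  · intro i hi i' hi' h
    exact (eq_and_eq_of_pow_mul_add_eq hord (by simpa using hi) (by simpa using hi') hj hj h).1
  · simp [pow_ne_zero _ hw0]

lemma spreadComponent_inter_spreadComponent (hord : orderOf w = N * (q - 1)) (hq : 2 ≤ q)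
    {j j' : ℕ} (hj : j < N) (hj' : j' < N) (hne : j ≠ j') :
    spreadComponent w q N j ∩ spreadComponent w q N j' = {0} := by
  refine Set.eq_singleton_iff_unique_mem.mpr ⟨⟨Set.mem_insert 0 _, Set.mem_insert 0 _⟩, ?_⟩
  rintro x ⟨hx | ⟨i, hi, rfl⟩, hx' | ⟨i', hi', h⟩⟩
  · exact hx
  · exact hx
  · exact hx'
  · exact absurd (eq_and_eq_of_pow_mul_add_eq hord (by omega) (by omega) hj hj' h).2 hne

end Spread

lemma exists_submodule_coe_eq_spreadComponent {r t : ℕ} [Fact r.Prime] [CharP F r]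
    [Module (ZMod r) F] {w : F} {N : ℕ} (hw : ∀ x : F, x ≠ 0 → ∃ i : ℕ, w ^ i = x)
    (hord : orderOf w = N * (r ^ t - 1)) (ht : 0 < t) {j : ℕ} (hj : j < N) :
    ∃ W : Submodule (ZMod r) F,
      (W : Set F) = spreadComponent w (r ^ t) N j ∧ Module.finrank (ZMod r) W = t := by
  have hq : 2 ≤ r ^ t := (Fact.out : r.Prime).two_le.trans (Nat.le_self_pow ht.ne' r)
  let K : Subfield F := (iterateFrobenius F r t).eqLocusField (RingHom.id F)
  let W := AddSubgroup.toZModSubmodule r (w ^ j • K.toAddSubgroup)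
  have hW : (W : Set F) = spreadComponent w (r ^ t) N j := by
    rw [spreadComponent_eq_smul hw hord hq, AddSubgroup.coe_toZModSubmodule,
      AddSubgroup.coe_pointwise_smul]
    congr 1
  refine ⟨W, hW, ?_⟩
  have hcard : Nat.card W = r ^ t := by
    rw [← SetLike.coe_sort_coe, Nat.card_coe_set_eq, hW, ncard_spreadComponent hord hq hj]
  have : Finite W := Nat.finite_of_card_ne_zero (by omega)
  rw [Module.natCard_eq_pow_finrank (K := ZMod r), Nat.card_zmod] at hcard
  exact Nat.pow_right_injective (Fact.out : r.Prime).two_le hcard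

section Primitive

variable [Fintype F] {w : F}

lemma orderOf_eq_card_sub_one (hw0 : w ≠ 0) (hw : ∀ x : F, x ≠ 0 → ∃ i : ℕ, w ^ i = x) :
    orderOf w = Fintype.card F - 1 := by
  classical
  let u : Fˣ := Units.mk0 w hw0
  have hgen : ∀ x : Fˣ, x ∈ Subgroup.zpowers u := fun x => by
    obtain ⟨i, hi⟩ := hw x x.ne_zero
    exact ⟨i, Units.ext (by simpa [u] using hi)⟩
  rw [← Units.val_mk0 hw0, orderOf_units, orderOf_eq_card_of_forall_mem_zpowers hgen,
    Nat.card_eq_fintype_card, Fintype.card_units]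

lemma card_eq_two_of_forall_ne_zero_eq_one (h : ∀ x : F, x ≠ 0 → x = 1) :
    Fintype.card F = 2 := by
  rw [← Nat.card_eq_fintype_card, Nat.card_eq_two_iff' 0]
  exact ⟨1, one_ne_zero, h⟩

end Primitive

/-- Cyclic construction of a (t-1)-spread: if w is a primitive element of
GF(2^p), t ∣ p and N = (2^p-1)/(2^t-1), then each set
S_j = {w^{iN+j} : 0 ≤ i ≤ 2^t - 2} ∪ {0} is a t-dimensional GF(2)-subspace of
GF(2^p), and for distinct j the S_j intersect only in 0. -/
theorem cyclic_spread_construction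
    (p t : ℕ) (ht : 0 < t) (hdvd : t ∣ p)
    (F : Type) [Field F] [Fintype F] [CharP F 2]
    (hF : Fintype.card F = 2 ^ p)
    (w : F) (hw : ∀ x : F, x ≠ 0 → ∃ i : ℕ, w ^ i = x)
    (N : ℕ) (hN : N = (2 ^ p - 1) / (2 ^ t - 1)) :
    letI : Algebra (ZMod 2) F := ZMod.algebra F 2
    (∀ j < N, ∃ W : Submodule (ZMod 2) F,
        (W : Set F) = insert 0 {x : F | ∃ i ≤ 2 ^ t - 2, x = w ^ (i * N + j)} ∧
        Module.finrank (ZMod 2) W = t) ∧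
    (∀ j < N, ∀ j' < N, j ≠ j' →
        insert 0 {x : F | ∃ i ≤ 2 ^ t - 2, x = w ^ (i * N + j)} ∩
          insert 0 {x : F | ∃ i ≤ 2 ^ t - 2, x = w ^ (i * N + j')} = {0}) := by
  let _ : Algebra (ZMod 2) F := ZMod.algebra F 2
  have hNq : N * (2 ^ t - 1) = Fintype.card F - 1 := by
    rw [hF, hN]
    exact Nat.div_mul_cancel (Nat.pow_sub_one_dvd_pow_sub_one 2 hdvd)
  obtain ⟨v, hv, hvord, hvw⟩ : ∃ v : F, (∀ x : F, x ≠ 0 → ∃ i : ℕ, v ^ i = x) ∧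
      orderOf v = N * (2 ^ t - 1) ∧
      ∀ j < N, spreadComponent v (2 ^ t) N j = spreadComponent w (2 ^ t) N j := by
    rcases eq_or_ne w 0 with rfl | hw0
    -- `hw` allows `w = 0` only when `F` has two elements; then `1` gives the same sets.
    · have hone : ∀ x : F, x ≠ 0 → x = 1 := fun x hx => by
        obtain ⟨i, rfl⟩ := hw x hx
        simp_all [zero_pow_eq]
      have h1 : N * (2 ^ t - 1) = 1 := by
        rw [hNq, card_eq_two_of_forall_ne_zero_eq_one hone]
      obtain ⟨rfl, hq⟩ := mul_eq_one.mp h1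
      refine ⟨1, fun x hx => ⟨0, (hone x hx).symm ▸ pow_zero 1⟩, by rw [orderOf_one, h1],
        fun j hj => ?_⟩
      obtain rfl : j = 0 := by omega
      simp [spreadComponent, show 2 ^ t - 2 = 0 by omega]
    · exact ⟨w, hw, hNq ▸ orderOf_eq_card_sub_one hw0 hw, fun _ _ => rfl⟩
  refine ⟨fun j hj => ?_, fun j hj j' hj' hne => ?_⟩
  · have h := exists_submodule_coe_eq_spreadComponent hv hvord ht hj
    rwa [hvw j hj] at h
  · have h := spreadComponent_inter_spreadComponent hvord (Nat.le_self_pow ht.ne' 2) hj hj' hne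
    rwa [hvw j hj, hvw j' hj'] at h
end
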